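/- arXiv:1908.05124 — 5 statements merged into one kernel-verified Lean document; each statement's English description precedes it below -/
import Mathlib

section
/- Let S be a finite set of points in ℝ² in general position with a, b ∈ S distinct. If c and c' are both witnesses for the exit edge ab and c and c' lie strictly on the same side of the line through a and b, then c = c'. Consequently, an exit edge has at most two witnesses, at most one on each side of the line through its endpoints. -/
open Finset

/-- Points of the plane. -/
abbrev Pt := ℝ × ℝ

/-- Twice the signed area of the triangle `p q r` (orientation determinant). -/
def det3 (p q r : Pt) : ℝ := (q.1 - p.1) * (r.2 - p.2) - (q.2 - p.2) * (r.1 - p.1)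

/-- A finite point set is in general position if no three distinct points are collinear. -/
def GenPos (S : Finset Pt) : Prop :=
  ∀ p ∈ S, ∀ q ∈ S, ∀ r ∈ S, p ≠ q → p ≠ r → q ≠ r → det3 p q r ≠ 0

/-- The line through `u` and `v` strictly separates the points `x` and `y`. -/
def StrictSep (u v x y : Pt) : Prop := det3 u v x * det3 u v y < 0

/-- `ab` is an exit edge of `S` with witness `c`: no point `p ∈ S \ {a,b,c}` is such that
the line through `a` and `p` strictly separates `b` from `c`, or the line through `b`
and `p` strictly separates `a` from `c`. -/
def IsExitWitness (S : Finset Pt) (a b c : Pt) : Prop :=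
  a ∈ S ∧ b ∈ S ∧ c ∈ S ∧ a ≠ b ∧ a ≠ c ∧ b ≠ c ∧
    ∀ p ∈ S, p ≠ a → p ≠ b → p ≠ c → ¬ StrictSep a p b c ∧ ¬ StrictSep b p a c

/-- `ab` is an exit edge of `S` if it has some witness. -/
def IsExitEdge (S : Finset Pt) (a b : Pt) : Prop := ∃ c, IsExitWitness S a b c

/-! Two witnesses `c`, `c'` on the same side of `ab` are seen from `a` in two different
directions inside the same open half-plane; whichever of the rays `ac`, `ac'` lies between
`ab` and the other one separates `b` from the other witness, contradicting the definition
of a witness. -/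

theorem det3_swap (p q r : Pt) : det3 p r q = -det3 p q r := by
  unfold det3; ring

theorem strictSep_or_strictSep_of_sameSide {a b c c' : Pt} (hcc' : det3 a c c' ≠ 0)
    (hside : 0 < det3 a b c * det3 a b c') :
    StrictSep a c b c' ∨ StrictSep a c' b c := by
  by_contra! h
  obtain ⟨hc, hc'⟩ := h
  simp only [StrictSep, not_lt, det3_swap a b c, det3_swap a b c', det3_swap a c c'] at hc hc'
  have hsq : 0 < det3 a c c' ^ 2 := by positivity
  -- `hc` and `hc'` say that `det3 a c c'` has the sign of `det3 a b c'` and the opposite sign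
  -- of `det3 a b c`; these two signs agree by `hside`.
  nlinarith [mul_nonneg hc hc']

/-- An exit edge has at most one witness strictly on each side of its supporting line. -/
theorem exit_edge_witness_unique_per_side (S : Finset Pt) (a b c c' : Pt)
    (hgp : GenPos S)
    (hw : IsExitWitness S a b c) (hw' : IsExitWitness S a b c')
    (hside : 0 < det3 a b c * det3 a b c') :
    c = c' := by
  by_contra hne
  obtain ⟨haS, -, hcS, -, hac, hbc, hcond⟩ := hw
  obtain ⟨-, -, hc'S, -, hac', hbc', hcond'⟩ := hw'
  have hcc' : det3 a c c' ≠ 0 := hgp a haS c hcS c' hc'S hac hac' hne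
  rcases strictSep_or_strictSep_of_sameSide hcc' hside with hsep | hsep
  · exact (hcond' c hcS hac.symm hbc.symm hne).1 hsep
  · exact (hcond c' hc'S hac'.symm hbc'.symm (Ne.symm hne)).1 hsep
end

section
/- Let S be a finite set of at least 4 points in ℝ² in general position, and let a, b, c ∈ S be distinct. If ab is an exit edge of S with witness c, then ac is not an exit edge of S with witness b, and bc is not an exit edge of S with witness a. -/
open Finset

lemma prod_pos_of_not_neg {x y : ℝ} (h : ¬ x * y < 0) (hx : x ≠ 0) (hy : y ≠ 0) :
    0 < x * y := ((mul_ne_zero hx hy).lt_or_gt).resolve_left h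

lemma det3_swap12 (p q r : Pt) : det3 q p r = -det3 p q r := by unfold det3; ring

lemma det3_cyc (p q r : Pt) : det3 q r p = det3 p q r := by unfold det3; ring

lemma three_neg_false {A B C : ℝ} (hAB : A * B < 0) (hBC : B * C < 0) (hAC : A * C < 0) :
    False := by nlinarith [mul_pos_of_neg_of_neg hAB hBC, mul_self_nonneg B]

/-- Core contradiction: if p sees none of the three separations, impossible. -/
lemma core (a b c p : Pt)
    (hA : det3 p b c ≠ 0) (hB : det3 p c a ≠ 0) (hC : det3 p a b ≠ 0)
    (h1 : ¬ StrictSep a p b c) (h2 : ¬ StrictSep b p a c) (h3 : ¬ StrictSep c p a b) :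
    False := by
  unfold StrictSep at h1 h2 h3
  set A := det3 p b c with hAdef
  set B := det3 p c a with hBdef
  set C := det3 p a b with hCdef
  have e1 : det3 a p b = -C := by rw [hCdef]; unfold det3; ring
  have e2 : det3 a p c = B := by rw [hBdef]; unfold det3; ring
  have e3 : det3 b p a = C := by rw [hCdef]; unfold det3; ring
  have e4 : det3 b p c = -A := by rw [hAdef]; unfold det3; ring
  have e5 : det3 c p a = -B := by rw [hBdef]; unfold det3; ring
  have e6 : det3 c p b = A := by rw [hAdef]; unfold det3; ring
  rw [e1, e2] at h1
  rw [e3, e4] at h2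
  rw [e5, e6] at h3
  have p1 := prod_pos_of_not_neg h1 (neg_ne_zero.2 hC) hB
  have p2 := prod_pos_of_not_neg h2 hC (neg_ne_zero.2 hA)
  have p3 := prod_pos_of_not_neg h3 (neg_ne_zero.2 hB) hA
  have hBC : B * C < 0 := by nlinarith
  have hAC : A * C < 0 := by nlinarith
  have hAB : A * B < 0 := by nlinarith
  exact three_neg_false hAB hBC hAC

/-- If `ab` is an exit edge with witness `c` (and `|S| ≥ 4`), then `ac` is not an exit
edge with witness `b`, and `bc` is not an exit edge with witness `a`. -/
theorem exit_edge_witness_not_reversible (S : Finset Pt) (a b c : Pt)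
    (hgp : GenPos S) (hcard : 4 ≤ S.card)
    (hw : IsExitWitness S a b c) :
    ¬ IsExitWitness S a c b ∧ ¬ IsExitWitness S b c a := by
  obtain ⟨ha, hb, hc, hab, hac, hbc, H⟩ := hw
  -- find a fourth point
  have hex : ∃ p ∈ S, p ≠ a ∧ p ≠ b ∧ p ≠ c := by
    by_contra h
    push_neg at h
    have hsub : S ⊆ {a, b, c} := by
      intro x hx
      simp only [Finset.mem_insert, Finset.mem_singleton]
      by_contra hx'
      push_neg at hx'
      exact hx'.2.2 (h x hx hx'.1 hx'.2.1)
    have := Finset.card_le_card hsub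
    have h3 : ({a, b, c} : Finset Pt).card ≤ 3 := by
      apply le_trans (Finset.card_insert_le _ _)
      simp [Finset.card_insert_le]
      exact lt_of_le_of_lt (Finset.card_insert_le _ _) (by simp)
    omega
  obtain ⟨p, hp, hpa, hpb, hpc⟩ := hex
  have hA : det3 p b c ≠ 0 := hgp p hp b hb c hc hpb hpc hbc
  have hB : det3 p c a ≠ 0 := hgp p hp c hc a ha hpc hpa (Ne.symm hac)
  have hC : det3 p a b ≠ 0 := hgp p hp a ha b hb hpa hpb hab
  obtain ⟨h1, h2⟩ := H p hp hpa hpb hpc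
  constructor
  · rintro ⟨-, -, -, -, -, -, H'⟩
    obtain ⟨-, h3⟩ := H' p hp hpa hpc hpb
    exact core a b c p hA hB hC h1 h2 h3
  · rintro ⟨-, -, -, -, -, -, H'⟩
    obtain ⟨-, h3'⟩ := H' p hp hpb hpc hpa
    have h3 : ¬ StrictSep c p a b := by
      unfold StrictSep at h3' ⊢
      rw [mul_comm]
      exact h3'
    exact core a b c p hA hB hC h1 h2 h3
end

section
/- Let S be a finite set of points in ℝ² in general position, let a, b ∈ S be distinct such that ab is an edge of the convex hull of S, and suppose |S| ≥ 3. Let p ∈ S \ {a,b} be a point minimizing the distance to the line through a and b. Then the open triangle with vertices a, b, p contains no point of S. -/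
open Finset

/-- `ab` is an edge of the convex hull of `S`: all other points of `S` lie strictly on
one side of the line through `a` and `b`. -/
def IsHullEdge (S : Finset Pt) (a b : Pt) : Prop :=
  (∀ p ∈ S, p ≠ a → p ≠ b → 0 < det3 a b p) ∨ (∀ p ∈ S, p ≠ a → p ≠ b → det3 a b p < 0)

/-! ### Auxiliary lemmas -/

section Aux

open Metric

lemma mul_sign' (r : ℝ) : r * Real.sign r = |r| := by
  rcases lt_trichotomy r 0 with h | h | h
  · rw [Real.sign_of_neg h, abs_of_neg h]; ring
  · simp [h]
  · rw [Real.sign_of_pos h, abs_of_pos h]; ring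

lemma abs_sign_le' (r : ℝ) : |Real.sign r| ≤ 1 := by
  rcases Real.sign_apply_eq r with h | h | h <;> simp [h]

noncomputable def Dd (a b : Pt) : ℝ := |b.1 - a.1| + |b.2 - a.2|

lemma Dd_pos (a b : Pt) (hab : a ≠ b) : 0 < Dd a b := by
  by_contra h
  push_neg at h
  have h1 : |b.1 - a.1| = 0 := le_antisymm
    (by have := abs_nonneg (b.2 - a.2); simp [Dd] at h; linarith) (abs_nonneg _)
  have h2 : |b.2 - a.2| = 0 := le_antisymm
    (by have := abs_nonneg (b.1 - a.1); simp [Dd] at h; linarith) (abs_nonneg _)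
  rw [abs_eq_zero, sub_eq_zero] at h1 h2
  exact hab (Prod.ext h1.symm h2.symm)

lemma mem_line_iff (a b y : Pt) :
    y ∈ affineSpan ℝ ({a, b} : Set Pt) ↔ ∃ r : ℝ, r • (b - a) = y - a := by
  have h : y = (y - a) +ᵥ a := by simp [vadd_eq_add]
  rw [h, vadd_left_mem_affineSpan_pair]
  simp [vsub_eq_sub, vadd_eq_add]

lemma det3_line (a b y : Pt) (hy : y ∈ affineSpan ℝ ({a, b} : Set Pt)) :
    det3 a b y = 0 := by
  rw [mem_line_iff] at hy
  obtain ⟨r, hr⟩ := hy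
  have h1 : y.1 - a.1 = r * (b.1 - a.1) := by
    have := congrArg Prod.fst hr; simpa using this.symm
  have h2 : y.2 - a.2 = r * (b.2 - a.2) := by
    have := congrArg Prod.snd hr; simpa using this.symm
  simp only [det3]
  rw [h1, h2]; ring

lemma line_of_det3 (a b y : Pt) (hab : a ≠ b) (hy : det3 a b y = 0) :
    y ∈ affineSpan ℝ ({a, b} : Set Pt) := by
  rw [mem_line_iff]
  have key : (b.1 - a.1) * (y.2 - a.2) = (b.2 - a.2) * (y.1 - a.1) := by
    simp only [det3] at hy; linarith
  by_cases h1 : b.1 - a.1 = 0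
  · have h2 : b.2 - a.2 ≠ 0 := by
      intro h2; exact hab (Prod.ext (by linarith) (by linarith))
    refine ⟨(y.2 - a.2) / (b.2 - a.2), Prod.ext ?_ ?_⟩ <;>
      simp [Prod.smul_fst, Prod.smul_snd] <;> field_simp <;> nlinarith [key]
  · refine ⟨(y.1 - a.1) / (b.1 - a.1), Prod.ext ?_ ?_⟩ <;>
      simp [Prod.smul_fst, Prod.smul_snd] <;> field_simp <;> nlinarith [key]

lemma infDist_ge (a b x : Pt) (hab : a ≠ b) :
    |det3 a b x| / Dd a b ≤ infDist x (affineSpan ℝ ({a, b} : Set Pt) : Set Pt) := by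
  have hD := Dd_pos a b hab
  have hne : (affineSpan ℝ ({a, b} : Set Pt) : Set Pt).Nonempty :=
    ⟨a, left_mem_affineSpan_pair ℝ a b⟩
  by_contra h
  push_neg at h
  rw [infDist_lt_iff hne] at h
  obtain ⟨y, hy, hdy⟩ := h
  have h0 : det3 a b y = 0 := det3_line a b y hy
  have hform : det3 a b x = (b.1 - a.1) * (x.2 - y.2) - (b.2 - a.2) * (x.1 - y.1) := by
    have : det3 a b x - det3 a b y
        = (b.1 - a.1) * (x.2 - y.2) - (b.2 - a.2) * (x.1 - y.1) := by
      simp only [det3]; ring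
    linarith [this, h0]
  have hd1 : |x.1 - y.1| ≤ dist x y := by
    rw [Prod.dist_eq]; simpa [Real.dist_eq] using le_max_left (dist x.1 y.1) (dist x.2 y.2)
  have hd2 : |x.2 - y.2| ≤ dist x y := by
    rw [Prod.dist_eq]; simpa [Real.dist_eq] using le_max_right (dist x.1 y.1) (dist x.2 y.2)
  have hbound : |det3 a b x| ≤ Dd a b * dist x y := by
    rw [hform]
    calc |(b.1 - a.1) * (x.2 - y.2) - (b.2 - a.2) * (x.1 - y.1)|
        ≤ |(b.1 - a.1) * (x.2 - y.2)| + |(b.2 - a.2) * (x.1 - y.1)| := abs_sub _ _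
      _ = |b.1 - a.1| * |x.2 - y.2| + |b.2 - a.2| * |x.1 - y.1| := by rw [abs_mul, abs_mul]
      _ ≤ |b.1 - a.1| * dist x y + |b.2 - a.2| * dist x y :=
          add_le_add (mul_le_mul_of_nonneg_left hd2 (abs_nonneg _))
            (mul_le_mul_of_nonneg_left hd1 (abs_nonneg _))
      _ = Dd a b * dist x y := by rw [Dd]; ring
  rw [lt_div_iff₀ hD] at hdy
  nlinarith [hbound, hdy]

lemma infDist_le' (a b x : Pt) (hab : a ≠ b) :
    infDist x (affineSpan ℝ ({a, b} : Set Pt) : Set Pt) ≤ |det3 a b x| / Dd a b := by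
  have hD := Dd_pos a b hab
  set s : ℝ := det3 a b x / Dd a b with hs
  set w : Pt := (-(Real.sign (b.2 - a.2)), Real.sign (b.1 - a.1)) with hw
  set y : Pt := x - s • w with hyd
  have hy0 : det3 a b y = 0 := by
    have : det3 a b y = det3 a b x
        - s * ((b.1 - a.1) * Real.sign (b.1 - a.1) + (b.2 - a.2) * Real.sign (b.2 - a.2)) := by
      simp only [hyd, hw, det3, Prod.fst_sub, Prod.snd_sub, Prod.smul_fst, Prod.smul_snd,
        smul_eq_mul]
      ring
    rw [this, mul_sign', mul_sign',
      show |b.1 - a.1| + |b.2 - a.2| = Dd a b from rfl, hs]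
    field_simp
    ring
  have hymem : y ∈ affineSpan ℝ ({a, b} : Set Pt) := line_of_det3 a b y hab hy0
  calc infDist x (affineSpan ℝ ({a, b} : Set Pt) : Set Pt) ≤ dist x y :=
        infDist_le_dist_of_mem hymem
    _ = ‖s • w‖ := by rw [dist_eq_norm, hyd]; congr 1; abel
    _ = |s| * ‖w‖ := by rw [norm_smul, Real.norm_eq_abs]
    _ ≤ |s| * 1 := by
        apply mul_le_mul_of_nonneg_left _ (abs_nonneg s)
        rw [hw, Prod.norm_def]
        simp only [Real.norm_eq_abs, abs_neg]
        exact max_le (abs_sign_le' _) (abs_sign_le' _)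
    _ = |det3 a b x| / Dd a b := by
        rw [mul_one, hs, abs_div, abs_of_pos hD]

lemma det3_left (a b : Pt) : det3 a b a = 0 := by simp [det3]

lemma det3_right (a b : Pt) : det3 a b b = 0 := by simp [det3]; ring

/-- The affine map `x ↦ det3 a b x`. -/
noncomputable def lineF (a b : Pt) : Pt →ᵃ[ℝ] ℝ where
  toFun x := det3 a b x
  linear :=
  { toFun := fun v => (b.1 - a.1) * v.2 - (b.2 - a.2) * v.1
    map_add' := by intro v w; simp; ring
    map_smul' := by intro r v; simp; ring }
  map_vadd' := by intro x v; simp [det3, vadd_eq_add]; ring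

lemma lineF_apply (a b x : Pt) : lineF a b x = det3 a b x := rfl

lemma det3_mem_uIcc (a b p : Pt) {x : Pt} (hx : x ∈ convexHull ℝ ({a, b, p} : Set Pt)) :
    det3 a b x ∈ Set.uIcc (0 : ℝ) (det3 a b p) := by
  have h1 : det3 a b x ∈ (lineF a b) '' (convexHull ℝ ({a, b, p} : Set Pt)) :=
    ⟨x, hx, rfl⟩
  rw [AffineMap.image_convexHull] at h1
  have h2 : (lineF a b) '' ({a, b, p} : Set Pt) = {0, det3 a b p} := by
    rw [Set.image_insert_eq, Set.image_insert_eq, Set.image_singleton,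
      lineF_apply, lineF_apply, lineF_apply, det3_left, det3_right]
    simp
  rw [h2, convexHull_pair, segment_eq_uIcc] at h1
  exact h1

end Aux

/-- If `ab` is a hull edge of `S` and `p ∈ S \ {a,b}` minimizes the distance to the
line through `a` and `b`, then the open triangle `a b p` contains no point of `S`. -/
theorem closest_point_to_hull_edge_gives_empty_triangle (S : Finset Pt) (a b p : Pt)
    (hgp : GenPos S) (ha : a ∈ S) (hb : b ∈ S) (hab : a ≠ b)
    (hcard : 3 ≤ S.card)
    (hhull : IsHullEdge S a b)
    (hp : p ∈ S) (hpa : p ≠ a) (hpb : p ≠ b)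
    (hmin : ∀ q ∈ S, q ≠ a → q ≠ b →
      Metric.infDist p (affineSpan ℝ ({a, b} : Set Pt) : Set Pt) ≤
        Metric.infDist q (affineSpan ℝ ({a, b} : Set Pt) : Set Pt)) :
    ∀ q ∈ S, q ∉ interior (convexHull ℝ ({a, b, p} : Set Pt)) := by
  intro q hq hqint
  have hc : det3 a b p ≠ 0 := hgp a ha b hb p hp hab (Ne.symm hpa) (Ne.symm hpb)
  set c : ℝ := det3 a b p with hcdef
  -- find a small ball around q inside the triangle
  obtain ⟨ε, hε, hball⟩ := Metric.isOpen_iff.mp isOpen_interior q hqint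
  set E : Pt := (-(b.2 - a.2), b.1 - a.1) with hE
  set m : ℝ := (b.1 - a.1) ^ 2 + (b.2 - a.2) ^ 2 with hm
  have hm0 : 0 < m := by
    rcases lt_or_eq_of_le (add_nonneg (sq_nonneg (b.1 - a.1)) (sq_nonneg (b.2 - a.2))) with h | h
    · exact h
    · exfalso
      have h1 : (b.1 - a.1) ^ 2 = 0 := by nlinarith [sq_nonneg (b.1 - a.1), sq_nonneg (b.2 - a.2)]
      have h2 : (b.2 - a.2) ^ 2 = 0 := by nlinarith [sq_nonneg (b.1 - a.1), sq_nonneg (b.2 - a.2)]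
      rw [pow_eq_zero_iff (by norm_num : (2:ℕ) ≠ 0)] at h1 h2
      exact hab (Prod.ext (by linarith [sub_eq_zero.mp h1]) (by linarith [sub_eq_zero.mp h2]))
  set n : ℝ := ‖E‖ with hn
  have hn0 : 0 ≤ n := norm_nonneg _
  set t : ℝ := ε / (2 * (n + 1)) with ht
  have ht0 : 0 < t := by positivity
  have htn : t * n < ε := by
    rw [ht, div_mul_eq_mul_div, div_lt_iff₀ (by positivity)]
    nlinarith
  have hmem : ∀ v : Pt, v = q + t • E ∨ v = q - t • E → v ∈ convexHull ℝ ({a, b, p} : Set Pt) := by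
    intro v hv
    apply interior_subset
    apply hball
    rw [Metric.mem_ball]
    rcases hv with rfl | rfl
    · rw [dist_eq_norm, add_sub_cancel_left, norm_smul, Real.norm_eq_abs, abs_of_pos ht0]
      exact htn
    · rw [dist_eq_norm]
      have : q - t • E - q = -(t • E) := by abel
      rw [this, norm_neg, norm_smul, Real.norm_eq_abs, abs_of_pos ht0]
      exact htn
  have hplus : det3 a b (q + t • E) = det3 a b q + t * m := by
    simp only [det3, hE, hm, Prod.fst_add, Prod.snd_add, Prod.smul_fst, Prod.smul_snd,
      smul_eq_mul]
    ring
  have hminus : det3 a b (q - t • E) = det3 a b q - t * m := by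
    simp only [det3, hE, hm, Prod.fst_sub, Prod.snd_sub, Prod.smul_fst, Prod.smul_snd,
      smul_eq_mul]
    ring
  have h1 := det3_mem_uIcc a b p (hmem _ (Or.inl rfl))
  have h2 := det3_mem_uIcc a b p (hmem _ (Or.inr rfl))
  rw [hplus, Set.mem_uIcc] at h1
  rw [hminus, Set.mem_uIcc] at h2
  set u : ℝ := det3 a b q with hu
  have htm : 0 < t * m := mul_pos ht0 hm0
  -- key strict inequalities
  have habs : |u| < |c| ∧ u ≠ 0 := by
    rcases lt_or_gt_of_ne hc with hcneg | hcpos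
    · -- c < 0
      have hA : u + t * m ≤ 0 := by rcases h1 with ⟨h, h'⟩ | ⟨h, h'⟩ <;> linarith
      have hB : c ≤ u - t * m := by rcases h2 with ⟨h, h'⟩ | ⟨h, h'⟩ <;> linarith
      have h3 : c < u := by linarith
      have h4 : u < 0 := by linarith
      constructor
      · rw [abs_of_neg h4, abs_of_neg hcneg]; linarith
      · exact ne_of_lt h4
    · -- c > 0
      have hA : u + t * m ≤ c := by rcases h1 with ⟨h, h'⟩ | ⟨h, h'⟩ <;> linarith
      have hB : 0 ≤ u - t * m := by rcases h2 with ⟨h, h'⟩ | ⟨h, h'⟩ <;> linarith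
      have h3 : u < c := by linarith
      have h4 : 0 < u := by linarith
      constructor
      · rw [abs_of_pos h4, abs_of_pos hcpos]; linarith
      · exact ne_of_gt h4
  obtain ⟨habs, hune⟩ := habs
  have hqa : q ≠ a := by
    intro h; apply hune; rw [hu, h]; exact det3_left a b
  have hqb : q ≠ b := by
    intro h; apply hune; rw [hu, h]; exact det3_right a b
  have hineq := hmin q hq hqa hqb
  have hD := Dd_pos a b hab
  have l1 := infDist_ge a b p hab
  have l2 := infDist_le' a b q hab
  have l3 : |u| / Dd a b < |c| / Dd a b := by gcongr
  linarith [hineq, l1, l2, l3]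
end

section
/- Let S be a finite set of points in ℝ² in general position, and let a, b, c ∈ S be distinct. If some line through two points of S strictly separates c from the relative interior of the segment ab, then there is such a separating line passing through a or through b; that is, there exists p ∈ S such that the line through a and p, or the line through b and p, strictly separates c from the relative interior of ab. -/
open Finset

/-- The line through `u` and `v` strictly separates the point `c` from the relative
interior (open segment) of `ab`. -/
def SepFromOpenSeg (u v c a b : Pt) : Prop :=
  ∀ x ∈ openSegment ℝ a b, det3 u v c * det3 u v x < 0

lemma det3_swap12_s6 (u v x : Pt) : det3 u v x = - det3 v u x := by simp [det3]; ring
lemma det3_swap23 (u v x : Pt) : det3 u v x = - det3 u x v := by simp [det3]; ring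
lemma det3_cycle (p q r : Pt) : det3 p q r = det3 q r p := by simp [det3]; ring
lemma det3_self13 (u v : Pt) : det3 u v u = 0 := by simp [det3]
lemma det3_self23 (u v : Pt) : det3 u v v = 0 := by simp [det3]; ring

lemma det3_affine (u v a b : Pt) (p q : ℝ) (h : p + q = 1) :
    det3 u v (p • a + q • b) = p * det3 u v a + q * det3 u v b := by
  have hq : q = 1 - p := by linarith
  subst hq
  simp [det3, Prod.smul_def, smul_eq_mul, Prod.fst_add, Prod.snd_add]
  ring

lemma key_id (a b c u v : Pt) :
    det3 a b u * det3 u v c - det3 a c u * det3 u v b + det3 b c u * det3 u v a = 0 := by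
  simp only [det3]; ring

lemma mid_mem (a b : Pt) : (1/2 : ℝ) • a + (1/2 : ℝ) • b ∈ openSegment ℝ a b :=
  ⟨1/2, 1/2, by norm_num, by norm_num, by norm_num, rfl⟩

lemma sep_a_of (a b c u : Pt) (h : det3 a b u * det3 a c u < 0) :
    SepFromOpenSeg a u c a b := by
  rintro x ⟨p, q, hp, hq, hpq, rfl⟩
  rw [det3_affine a u a b p q hpq, det3_self13]
  have e1 : det3 a u c = -det3 a c u := det3_swap23 a u c
  have e2 : det3 a u b = -det3 a b u := det3_swap23 a u b
  rw [e1, e2]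
  have := mul_neg_of_pos_of_neg hq h
  nlinarith [this]

lemma sep_b_of (a b c u : Pt) (h : 0 < det3 a b u * det3 b c u) :
    SepFromOpenSeg b u c a b := by
  rintro x ⟨p, q, hp, hq, hpq, rfl⟩
  rw [det3_affine b u a b p q hpq, det3_self13]
  have e1 : det3 b u c = -det3 b c u := det3_swap23 b u c
  have e2 : det3 b u a = det3 a b u := (det3_cycle a b u).symm
  rw [e1, e2]
  have := mul_pos hp h
  nlinarith [this]

/-- If some line spanned by two points of `S` strictly separates `c` from the relative
interior of `ab`, then there is such a line through `a` or through `b`. -/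
theorem separating_line_through_endpoint (S : Finset Pt) (a b c : Pt)
    (hgp : GenPos S) (ha : a ∈ S) (hb : b ∈ S) (hc : c ∈ S)
    (hab : a ≠ b) (hac : a ≠ c) (hbc : b ≠ c)
    (hsep : ∃ u ∈ S, ∃ v ∈ S, u ≠ v ∧ SepFromOpenSeg u v c a b) :
    ∃ p ∈ S, (p ≠ a ∧ SepFromOpenSeg a p c a b) ∨ (p ≠ b ∧ SepFromOpenSeg b p c a b) := by
  obtain ⟨u, hu, v, hv, huv, hsepuv⟩ := hsep
  -- symmetric version: lines uv and vu separate equally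
  have symm_sep : ∀ u' v' : Pt, SepFromOpenSeg u' v' c a b → SepFromOpenSeg v' u' c a b := by
    intro u' v' h x hx
    have h' := h x hx
    rw [det3_swap12_s6 u' v' c, det3_swap12_s6 u' v' x] at h'
    nlinarith [h']
  by_cases hua : u = a
  · subst hua; exact ⟨v, hv, Or.inl ⟨Ne.symm huv, hsepuv⟩⟩
  by_cases hva : v = a
  · subst hva; exact ⟨u, hu, Or.inl ⟨huv, symm_sep u v hsepuv⟩⟩
  by_cases hub : u = b
  · subst hub; exact ⟨v, hv, Or.inr ⟨Ne.symm huv, hsepuv⟩⟩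
  by_cases hvb : v = b
  · subst hvb; exact ⟨u, hu, Or.inr ⟨huv, symm_sep u v hsepuv⟩⟩
  by_cases huc : u = c
  · exfalso
    have h0 := hsepuv _ (mid_mem a b)
    rw [huc, det3_self13] at h0
    simp at h0
  by_cases hvc : v = c
  · exfalso
    have h0 := hsepuv _ (mid_mem a b)
    rw [hvc, det3_self23] at h0
    simp at h0
  -- main case: u, v ∉ {a, b, c}
  have hDa : det3 u v a ≠ 0 := hgp u hu v hv a ha huv hua hva
  have hDb : det3 u v b ≠ 0 := hgp u hu v hv b hb huv hub hvb
  have hDc : det3 u v c ≠ 0 := hgp u hu v hv c hc huv huc hvc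
  have hA : det3 a b u ≠ 0 := hgp a ha b hb u hu hab (Ne.symm hua) (Ne.symm hub)
  have hB : det3 a c u ≠ 0 := hgp a ha c hc u hu hac (Ne.symm hua) (Ne.symm huc)
  have hC : det3 b c u ≠ 0 := hgp b hb c hc u hu hbc (Ne.symm hub) (Ne.symm huc)
  set P := det3 u v c * det3 u v a with hP
  set Q := det3 u v c * det3 u v b with hQ
  have key : ∀ p q : ℝ, 0 < p → 0 < q → p + q = 1 → p * P + q * Q < 0 := by
    intro p q hp hq hpq
    have hx : p • a + q • b ∈ openSegment ℝ a b := ⟨p, q, hp, hq, hpq, rfl⟩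
    have h1 := hsepuv _ hx
    rw [det3_affine u v a b p q hpq] at h1
    rw [hP, hQ]; nlinarith [h1]
  have hsum : P + Q < 0 := by
    have := key (1/2) (1/2) (by norm_num) (by norm_num) (by norm_num)
    linarith
  -- both P and Q are negative
  have hboth : ∀ P' Q' : ℝ, P' ≠ 0 →
      (∀ p q : ℝ, 0 < p → 0 < q → p + q = 1 → p * P' + q * Q' < 0) → P' < 0 := by
    intro P' Q' hne hk
    rcases hne.lt_or_gt with h | h
    · exact h
    · exfalso
      have hQ' : Q' < 0 := by
        have := hk (1/2) (1/2) (by norm_num) (by norm_num) (by norm_num); linarith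
      have hPQ : 0 < P' - Q' := by linarith
      have hp : 0 < -Q' / (P' - Q') := div_pos (by linarith) hPQ
      have hq : 0 < P' / (P' - Q') := div_pos h hPQ
      have hs : -Q' / (P' - Q') + P' / (P' - Q') = 1 := by field_simp; ring
      have hv0 : -Q' / (P' - Q') * P' + P' / (P' - Q') * Q' = 0 := by field_simp; ring
      have := hk _ _ hp hq hs
      linarith
  have hPneg : P < 0 := hboth P Q (mul_ne_zero hDc hDa) key
  have hQneg : Q < 0 := by
    refine hboth Q P (mul_ne_zero hDc hDb) ?_
    intro p q hp hq hpq
    have := key q p hq hp (by linarith)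
    linarith
  -- case on sign of det3 a b u * det3 a c u
  rcases (mul_ne_zero hA hB).lt_or_gt with hAB | hAB
  · exact ⟨u, hu, Or.inl ⟨hua, sep_a_of a b c u hAB⟩⟩
  rcases (mul_ne_zero hA hC).lt_or_gt with hAC | hAC
  · exfalso
    have hid : det3 a b u * det3 u v c - det3 a c u * det3 u v b
        + det3 b c u * det3 u v a = 0 := key_id a b c u v
    have h2 : (det3 a b u * det3 u v c) * (det3 a b u * det3 u v c)
        = (det3 a b u * det3 a c u) * (det3 u v c * det3 u v b)
          - (det3 a b u * det3 b c u) * (det3 u v c * det3 u v a) := by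
      linear_combination (det3 a b u * det3 u v c) * hid
    have t1 : (det3 a b u * det3 a c u) * (det3 u v c * det3 u v b) < 0 :=
      mul_neg_of_pos_of_neg hAB hQneg
    have t2 : 0 < (det3 a b u * det3 b c u) * (det3 u v c * det3 u v a) :=
      mul_pos_of_neg_of_neg hAC hPneg
    have t3 : 0 < (det3 a b u * det3 u v c) * (det3 a b u * det3 u v c) :=
      mul_self_pos.mpr (mul_ne_zero hA hDc)
    linarith
  · exact ⟨u, hu, Or.inr ⟨hub, sep_b_of a b c u hAC⟩⟩
end

section
/- Let S be a finite set of points in ℝ² in general position and let a, b ∈ S be distinct points such that ab is an exit edge of S with some witness c lying strictly on the left of the directed line from a to b. Then there is no 4-hole abxy in S, traced counterclockwise with y strictly on the left of the directed line from a to b, such that the reflex angle of abxy (if abxy is non-convex) is incident to the edge ab. -/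
open Finset

/-- The four points `p q r s`, in this cyclic order, are the vertices of a convex
quadrilateral traced counterclockwise. -/
def ConvexCCW4 (p q r s : Pt) : Prop :=
  0 < det3 p q r ∧ 0 < det3 q r s ∧ 0 < det3 r s p ∧ 0 < det3 s p q

/-- The quadrilateral `a b x y`, traced counterclockwise with `y` strictly to the left
of the directed line `a → b`, is a (general) 4-hole in `S` whose reflex angle (if the
quadrilateral is non-convex) is incident to the edge `ab`.  The three cases are:
convex; reflex at `b` (then `x` is right of `a → b` and the open region is
`int conv{a,x,y} \ conv{a,b,x}`); reflex at `a` (then `x` is right of `a → b` and the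
open region is `int conv{b,x,y} \ conv{y,a,b}`). -/
def FourHoleOnLeft (S : Finset Pt) (a b x y : Pt) : Prop :=
  x ∈ S ∧ y ∈ S ∧ x ≠ a ∧ x ≠ b ∧ y ≠ a ∧ y ≠ b ∧ x ≠ y ∧ 0 < det3 a b y ∧
  ((ConvexCCW4 a b x y ∧
      ∀ p ∈ S, p ∉ interior (convexHull ℝ ({a, b, x, y} : Set Pt))) ∨
   (det3 a b x < 0 ∧ 0 < det3 a x y ∧ b ∈ interior (convexHull ℝ ({a, x, y} : Set Pt)) ∧
      ∀ p ∈ S, p ∉ interior (convexHull ℝ ({a, x, y} : Set Pt)) \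
        convexHull ℝ ({a, b, x} : Set Pt)) ∨
   (det3 a b x < 0 ∧ 0 < det3 b x y ∧ a ∈ interior (convexHull ℝ ({b, x, y} : Set Pt)) ∧
      ∀ p ∈ S, p ∉ interior (convexHull ℝ ({b, x, y} : Set Pt)) \
        convexHull ℝ ({y, a, b} : Set Pt)))

lemma det3_sum (p q r z : Pt) : det3 p q z + det3 q r z + det3 r p z = det3 p q r := by
  unfold det3; ring

lemma convex_halfplane (u v : Pt) : Convex ℝ {z : Pt | 0 ≤ det3 u v z} := by
  intro s hs t ht α β hα hβ hαβ
  have h : det3 u v (α • s + β • t) = α * det3 u v s + β * det3 u v t := by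
    simp only [det3, Prod.fst_add, Prod.snd_add, Prod.smul_fst, Prod.smul_snd, smul_eq_mul]
    linear_combination (v.1 * u.2 - v.2 * u.1) * hαβ
  have : 0 ≤ det3 u v (α • s + β • t) := by
    rw [h]; exact add_nonneg (mul_nonneg hα hs) (mul_nonneg hβ ht)
  exact this

lemma hull_halfplane {u v p q r : Pt} (hp : 0 ≤ det3 u v p) (hq : 0 ≤ det3 u v q)
    (hr : 0 ≤ det3 u v r) {z : Pt} (hz : z ∈ convexHull ℝ ({p, q, r} : Set Pt)) :
    0 ≤ det3 u v z :=
  convexHull_min (by intro w hw; rcases hw with h | h | h <;> subst h <;> assumption)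
    (convex_halfplane u v) hz

lemma mem_hull_triangle {p q r w : Pt} (h1 : 0 < det3 p q w) (h2 : 0 < det3 q r w)
    (h3 : 0 < det3 r p w) : w ∈ convexHull ℝ ({p, q, r} : Set Pt) := by
  have hΔ : 0 < det3 p q r := by have := det3_sum p q r w; linarith
  have key := Finset.centerMass_mem_convexHull (t := (Finset.univ : Finset (Fin 3)))
      (w := ![det3 q r w, det3 r p w, det3 p q w]) (z := ![p, q, r]) (s := ({p, q, r} : Set Pt))
      (by intro i _; fin_cases i <;> simp <;> linarith)
      (by simp [Fin.sum_univ_three]; linarith)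
      (by intro i _; fin_cases i <;> simp)
  have hs : det3 q r w + det3 r p w + det3 p q w ≠ 0 := by linarith
  have hcm : Finset.univ.centerMass ![det3 q r w, det3 r p w, det3 p q w] ![p, q, r] = w := by
    rw [Finset.centerMass]
    simp only [Fin.sum_univ_three, Matrix.cons_val_zero, Matrix.cons_val_one, Matrix.head_cons,
      Matrix.cons_val_two, Matrix.tail_cons]
    rw [inv_smul_eq_iff₀ hs]
    refine Prod.ext ?_ ?_ <;>
      · simp only [det3, Prod.fst_add, Prod.snd_add, Prod.smul_fst, Prod.smul_snd, smul_eq_mul]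
        ring
  rwa [hcm] at key

lemma mem_interior_triangle {p q r z : Pt} (h1 : 0 < det3 p q z) (h2 : 0 < det3 q r z)
    (h3 : 0 < det3 r p z) : z ∈ interior (convexHull ℝ ({p, q, r} : Set Pt)) := by
  have hO : IsOpen {w : Pt | 0 < det3 p q w ∧ 0 < det3 q r w ∧ 0 < det3 r p w} := by
    have hc : ∀ u v : Pt, Continuous fun w : Pt => det3 u v w := by
      intro u v; unfold det3; fun_prop
    exact (isOpen_lt continuous_const (hc p q)).inter
      ((isOpen_lt continuous_const (hc q r)).inter (isOpen_lt continuous_const (hc r p)))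
  have hsub : {w : Pt | 0 < det3 p q w ∧ 0 < det3 q r w ∧ 0 < det3 r p w} ⊆
      convexHull ℝ ({p, q, r} : Set Pt) := fun w hw => mem_hull_triangle hw.1 hw.2.1 hw.2.2
  exact interior_maximal hsub hO ⟨h1, h2, h3⟩

lemma sign_pos_of_prod {u v : ℝ} (h : 0 ≤ u * v) (hu : 0 < u) (hv : v ≠ 0) : 0 < v := by
  rcases hv.lt_or_gt with h' | h'
  · nlinarith
  · exact h'

lemma sign_neg_of_prod {u v : ℝ} (h : 0 ≤ u * v) (hu : u < 0) (hv : v ≠ 0) : v < 0 := by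
  rcases hv.lt_or_gt with h' | h'
  · exact h'
  · nlinarith


/-- If `ab` is an exit edge of `S` with a witness `c` strictly to the left of the
directed line `a → b`, then there is no 4-hole `a b x y` traced counterclockwise with
`y` on the left whose reflex angle (if any) is incident to `ab`. -/
theorem exit_edge_witness_left_no_four_hole (S : Finset Pt) (a b c : Pt)
    (hgp : GenPos S)
    (hw : IsExitWitness S a b c) (hleft : 0 < det3 a b c) :
    ¬ ∃ x y, FourHoleOnLeft S a b x y := by
  obtain ⟨haS, hbS, hcS, hab, hac, hbc, hexit⟩ := hw
  rintro ⟨x, y, hxS, hyS, hxa, hxb, hya, hyb, hxy, haby, hcase⟩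
  -- handy det3 rewrites
  have cyc : ∀ p q r : Pt, det3 p q r = det3 q r p := by intro p q r; unfold det3; ring
  have swp : ∀ p q r : Pt, det3 p q r = -det3 q p r := by intro p q r; unfold det3; ring
  have z13 : ∀ u v : Pt, det3 u v u = 0 := by intro u v; unfold det3; ring
  have z23 : ∀ u v : Pt, det3 u v v = 0 := by intro u v; unfold det3; ring
  rcases hcase with ⟨⟨h1, h2, h3, h4⟩, hempty⟩ | ⟨habx, haxy, hbint, hempty⟩ |
      ⟨habx, hbxy, haint, _⟩
  · -- convex case
    by_cases hcx : c = x
    · -- use p = y : ¬ StrictSep b y a c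
      have hE := (hexit y hyS hya hyb (by rw [hcx]; exact hxy.symm)).2
      unfold StrictSep at hE
      push_neg at hE
      have hbya : det3 b y a = det3 a b y := by rw [cyc a b y, cyc b y a]
      have hbyc : det3 b y c = -det3 b x y := by rw [hcx]; unfold det3; ring
      nlinarith [hE, h2, haby]
    · -- use p = x
      have hE := hexit x hxS hxa hxb (fun h => hcx h.symm)
      unfold StrictSep at hE
      push_neg at hE
      obtain ⟨hE1, hE2⟩ := hE
      have haxb : det3 a x b = -det3 a b x := by unfold det3; ring
      have hbxa : det3 b x a = det3 a b x := by rw [cyc a b x, cyc b x a]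
      have haxc_ne : det3 a x c ≠ 0 := hgp a haS x hxS c hcS hxa.symm hac (fun h => hcx h.symm)
      have hbxc_ne : det3 b x c ≠ 0 := hgp b hbS x hxS c hcS hxb.symm hbc (fun h => hcx h.symm)
      have haxc : det3 a x c < 0 := by
        refine sign_neg_of_prod ?_ (by linarith [haxb] : det3 a x b < 0) haxc_ne
        nlinarith [hE1]
      have hbxc : 0 < det3 b x c := by
        refine sign_pos_of_prod ?_ (by linarith [hbxa] : 0 < det3 b x a) hbxc_ne
        nlinarith [hE2]
      have hxac : 0 < det3 x a c := by rw [show det3 x a c = -det3 a x c from by unfold det3; ring]; linarith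
      have hmem : c ∈ interior (convexHull ℝ ({a, b, x} : Set Pt)) :=
        mem_interior_triangle hleft hbxc hxac
      have hsub : ({a, b, x} : Set Pt) ⊆ ({a, b, x, y} : Set Pt) := by
        intro z hz; simp only [Set.mem_insert_iff, Set.mem_singleton_iff] at hz ⊢; tauto
      exact hempty c hcS (interior_mono (convexHull_mono hsub) hmem)
  · -- reflex at b
    have hxyb : 0 < det3 x y b := by
      have h0 : 0 ≤ det3 x y b :=
        hull_halfplane (p := a) (q := x) (r := y)
          (by rw [show det3 x y a = det3 a x y from by rw [cyc x y a, cyc y a x]]; linarith)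
          (le_of_eq (z13 x y).symm) (le_of_eq (z23 x y).symm) (interior_subset hbint)
      have hne : det3 x y b ≠ 0 := hgp x hxS y hyS b hbS hxy hxb hyb
      exact lt_of_le_of_ne h0 (Ne.symm hne)
    by_cases hcx : c = x
    · rw [hcx] at hleft; linarith
    -- use p = x
    have hE := hexit x hxS hxa hxb (fun h => hcx h.symm)
    unfold StrictSep at hE
    push_neg at hE
    obtain ⟨hE1, hE2⟩ := hE
    have haxb : det3 a x b = -det3 a b x := by unfold det3; ring
    have hbxa : det3 b x a = det3 a b x := by rw [cyc a b x, cyc b x a]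
    have haxc_ne : det3 a x c ≠ 0 := hgp a haS x hxS c hcS hxa.symm hac (fun h => hcx h.symm)
    have hbxc_ne : det3 b x c ≠ 0 := hgp b hbS x hxS c hcS hxb.symm hbc (fun h => hcx h.symm)
    have haxc : 0 < det3 a x c := by
      refine sign_pos_of_prod ?_ (by linarith [haxb] : 0 < det3 a x b) haxc_ne
      nlinarith [hE1]
    have hbxc : det3 b x c < 0 := by
      refine sign_neg_of_prod ?_ (by linarith [hbxa] : det3 b x a < 0) hbxc_ne
      nlinarith [hE2]
    by_cases hcy : c = y
    · rw [hcy] at hbxc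
      rw [show det3 b x y = det3 x y b from by rw [cyc b x y]] at hbxc; linarith
    -- use p = y (first part)
    have hEy := (hexit y hyS hya hyb (fun h => hcy h.symm)).1
    unfold StrictSep at hEy
    push_neg at hEy
    have hayb : det3 a y b = -det3 a b y := by unfold det3; ring
    have hayc_ne : det3 a y c ≠ 0 := hgp a haS y hyS c hcS hya.symm hac (fun h => hcy h.symm)
    have hayc : det3 a y c < 0 := by
      refine sign_neg_of_prod ?_ (by linarith [hayb] : det3 a y b < 0) hayc_ne
      nlinarith [hEy]
    have hyac : 0 < det3 y a c := by
      rw [show det3 y a c = -det3 a y c from by unfold det3; ring]; linarith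
    have hbxy : 0 < det3 b x y := by
      rw [show det3 b x y = det3 x y b from by rw [cyc b x y]]; linarith
    -- Plücker: det3 a b x * det3 x y c = det3 a x y * det3 b x c - det3 a x c * det3 b x y
    have hid : det3 a b x * det3 x y c =
        det3 a x y * det3 b x c - det3 a x c * det3 b x y := by unfold det3; ring
    have hxyc : 0 < det3 x y c := by
      nlinarith [hid, mul_pos haxy (neg_pos.mpr hbxc), mul_pos haxc hbxy, habx]
    have hmem : c ∈ interior (convexHull ℝ ({a, x, y} : Set Pt)) :=
      mem_interior_triangle haxc hxyc hyac
    have hnot : c ∉ convexHull ℝ ({a, b, x} : Set Pt) := by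
      intro hc
      have h0 : 0 ≤ det3 b a c :=
        hull_halfplane (p := a) (q := b) (r := x) (le_of_eq (z23 b a).symm)
          (le_of_eq (z13 b a).symm)
          (by rw [show det3 b a x = -det3 a b x from swp b a x]; linarith) hc
      rw [show det3 b a c = -det3 a b c from swp b a c] at h0; linarith
    exact hempty c hcS ⟨hmem, hnot⟩
  · -- reflex at a : impossible
    have h0 : 0 ≤ det3 b x a :=
      hull_halfplane (p := b) (q := x) (r := y) (le_of_eq (z13 b x).symm)
        (le_of_eq (z23 b x).symm) (le_of_lt hbxy) (interior_subset haint)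
    rw [show det3 b x a = det3 a b x from by rw [cyc a b x, cyc b x a]] at h0
    linarith
end
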